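/- Suppose nonnegative numbers M_n(s) := E[Y_s^{αn}] (n ∈ ℕ₀, s ≥ 0) satisfy M_0 ≤ 1 and the recursion M_n(s) ≤ y^{αn} + |ψ(αn) − p| ∫₀^s M_{n−1}(v) dv for all n ≥ 1, s ≥ 0, with |ψ(αn) − p| = |a_{n−1}|/|a_n| where a_k = (∏_{l=1}^k(ψ(lα)−p))^{-1}. Then M_n(s) ≤ ∑_{k=0}^n (|a_{n−k}|/|a_n|) y^{α(n−k)} s^k/k! for all n ∈ ℕ₀ and s ≥ 0. -/

import Mathlib

open MeasureTheory Real Filter Set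

theorem stmt10 (ψ : ℝ → ℝ) (p α y : ℝ) (hp : 0 ≤ p) (hα : 0 < α) (hy : 0 < y)
    (hne : ∀ l : ℕ, 1 ≤ l → ψ ((l : ℝ) * α) ≠ p)
    (a : ℕ → ℝ)
    (ha : ∀ k, a k = (∏ l ∈ Finset.Icc 1 k, (ψ ((l : ℝ) * α) - p))⁻¹)
    (M : ℕ → ℝ → ℝ)
    (hM0 : ∀ s, 0 ≤ s → M 0 s ≤ 1)
    (hMnn : ∀ n s, 0 ≤ s → 0 ≤ M n s)
    (hMint : ∀ n : ℕ, ∀ s, 0 ≤ s → IntervalIntegrable (M n) MeasureTheory.volume 0 s)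
    (hrec : ∀ n : ℕ, 1 ≤ n → ∀ s, 0 ≤ s →
      M n s ≤ y ^ (α * (n : ℝ)) + |ψ ((n : ℝ) * α) - p| * ∫ v in (0 : ℝ)..s, M (n - 1) v) :
    ∀ n : ℕ, ∀ s, 0 ≤ s →
      M n s ≤ ∑ k ∈ Finset.range (n + 1),
        (|a (n - k)| / |a n|) * y ^ (α * ((n - k : ℕ) : ℝ)) * s ^ k / (Nat.factorial k) := by
  have ha0 : a 0 = 1 := by simp [ha]
  have hane : ∀ k, a k ≠ 0 := by
    intro k
    rw [ha]
    refine inv_ne_zero (Finset.prod_ne_zero_iff.2 ?_)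
    intro l hl
    exact sub_ne_zero.2 (hne l (Finset.mem_Icc.1 hl).1)
  have hstep : ∀ m : ℕ, a (m + 1) = a m * (ψ (((m + 1 : ℕ) : ℝ) * α) - p)⁻¹ := by
    intro m
    rw [ha, ha, Finset.prod_Icc_succ_top (Nat.le_add_left 1 m), mul_inv]
  have habs : ∀ m : ℕ, |ψ (((m + 1 : ℕ) : ℝ) * α) - p| = |a m| / |a (m + 1)| := by
    intro m
    have hne' : ψ (((m + 1 : ℕ) : ℝ) * α) - p ≠ 0 :=
      sub_ne_zero.2 (hne (m + 1) (by omega))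
    have h2 : |ψ (((m + 1 : ℕ) : ℝ) * α) - p| ≠ 0 := abs_ne_zero.2 hne'
    rw [hstep m, abs_mul, abs_inv]
    rw [eq_div_iff (by
      refine mul_ne_zero (abs_ne_zero.2 (hane m)) (inv_ne_zero h2))]
    field_simp
  intro n
  induction n with
  | zero =>
    intro s hs
    simpa [ha0] using hM0 s hs
  | succ m ih =>
    intro s hs
    have hrec' := hrec (m + 1) (by omega) s hs
    simp only [Nat.add_sub_cancel] at hrec'
    -- the polynomial bound
    set f : ℝ → ℝ := fun v => ∑ k ∈ Finset.range (m + 1),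
        (|a (m - k)| / |a m|) * y ^ (α * ((m - k : ℕ) : ℝ)) * v ^ k / (Nat.factorial k) with hf
    have hfcont : Continuous f := by
      apply continuous_finset_sum
      intro k _
      fun_prop
    have hfint : IntervalIntegrable f volume 0 s := hfcont.intervalIntegrable 0 s
    have hmono : (∫ v in (0:ℝ)..s, M m v) ≤ ∫ v in (0:ℝ)..s, f v := by
      apply intervalIntegral.integral_mono_on hs (hMint m s hs) hfint
      intro v hv
      exact ih v hv.1
    have hfval : (∫ v in (0:ℝ)..s, f v) = ∑ k ∈ Finset.range (m + 1),
        (|a (m - k)| / |a m|) * y ^ (α * ((m - k : ℕ) : ℝ)) * s ^ (k + 1) /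
          (Nat.factorial (k + 1)) := by
      rw [hf, intervalIntegral.integral_finset_sum]
      · refine Finset.sum_congr rfl fun k _ => ?_
        have : (fun v : ℝ => (|a (m - k)| / |a m|) * y ^ (α * ((m - k : ℕ) : ℝ)) * v ^ k /
            (Nat.factorial k)) = fun v : ℝ =>
            ((|a (m - k)| / |a m|) * y ^ (α * ((m - k : ℕ) : ℝ)) / (Nat.factorial k)) * v ^ k := by
          funext v; ring
        rw [this, intervalIntegral.integral_const_mul, integral_pow]
        have hk1 : ((Nat.factorial (k + 1) : ℝ)) = (Nat.factorial k) * (k + 1) := by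
          rw [Nat.factorial_succ]; push_cast; ring
        rw [hk1]
        have h1 : (Nat.factorial k : ℝ) ≠ 0 := Nat.cast_ne_zero.2 (Nat.factorial_ne_zero k)
        have h2 : ((k : ℝ) + 1) ≠ 0 := by positivity
        field_simp
        ring
      · intro k _
        apply Continuous.intervalIntegrable
        fun_prop
    calc M (m + 1) s ≤ y ^ (α * ((m + 1 : ℕ) : ℝ)) +
          |ψ (((m + 1 : ℕ) : ℝ) * α) - p| * ∫ v in (0:ℝ)..s, M m v := hrec'
      _ ≤ y ^ (α * ((m + 1 : ℕ) : ℝ)) +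
          |ψ (((m + 1 : ℕ) : ℝ) * α) - p| * ∫ v in (0:ℝ)..s, f v := by
            have := mul_le_mul_of_nonneg_left hmono (abs_nonneg (ψ (((m + 1 : ℕ) : ℝ) * α) - p))
            linarith
      _ = ∑ k ∈ Finset.range (m + 1 + 1),
          (|a (m + 1 - k)| / |a (m + 1)|) * y ^ (α * ((m + 1 - k : ℕ) : ℝ)) * s ^ k /
            (Nat.factorial k) := by
        rw [hfval, habs m]
        conv_rhs => rw [Finset.sum_range_succ']
        rw [Finset.mul_sum, add_comm]
        congr 1
        · refine Finset.sum_congr rfl fun k _ => ?_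
          have h1 : |a m| ≠ 0 := abs_ne_zero.2 (hane m)
          have h2 : |a (m + 1)| ≠ 0 := abs_ne_zero.2 (hane (m + 1))
          rw [Nat.succ_sub_succ]
          field_simp
        · rw [Nat.sub_zero, div_self (abs_ne_zero.2 (hane (m + 1)))]
          simp
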